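/- arXiv:1210.7716 — 3 statements merged into one kernel-verified Lean document; each statement's English description precedes it below -/
import Mathlib

section
/- Let k_1, ..., k_n be positive integers with k_1 + ⋯ + k_n = m. In ℝ^m with the ℓ^1 norm, define unit vectors y^1, ..., y^n where y^j = (1/k_j) times the sum of the standard basis vectors e_i for i ranging over the j-th consecutive block of k_j indices. Then the symmetric m-linear form L(x^1,...,x^m) = (1/m!)∑_{σ∈S_m} x^1_{σ(1)}⋯x^m_{σ(m)} (associated with the polynomial x ↦ x_1⋯x_m), evaluated with y^j repeated k_j times for j = 1, ..., n, equals (1/m!) · (k_1! ⋯ k_n!)/(k_1^{k_1} ⋯ k_n^{k_n}). -/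
open Equiv Finset

/-- Fiber-preserving permutations correspond to tuples of permutations of fibers. -/
def fiberPermEquiv {m n : Type*} [DecidableEq n] (b : m → n) :
    {σ : Equiv.Perm m // ∀ i, b (σ i) = b i} ≃ ∀ j, Equiv.Perm {i // b i = j} where
  toFun σ j :=
    { toFun := fun i => ⟨σ.1 i.1, by rw [σ.2 i.1, i.2]⟩
      invFun := fun i => ⟨σ.1.symm i.1, by
        have := σ.2 (σ.1.symm i.1); rw [Equiv.apply_symm_apply] at this; rw [← this, i.2]⟩
      left_inv := fun i => by simp
      right_inv := fun i => by simp }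
  invFun F :=
    ⟨((sigmaFiberEquiv b).symm.trans (Equiv.sigmaCongrRight F)).trans (sigmaFiberEquiv b),
      fun i => (F (b i) ⟨i, rfl⟩).2⟩
  left_inv σ := by
    ext i
    rfl
  right_inv F := by
    funext j
    ext i
    obtain ⟨i, hi⟩ := i
    subst hi
    rfl


/-- the symmetrized coordinate-product form evaluated on the
block-averaged unit vectors `y^j` equals `(1/m!) ∏ k_j! / k_j^{k_j}`.
The blocks are encoded by a map `b : Fin m → Fin n` assigning to each of the
`m` coordinates its block, with block `j` of size `k j`. The vector
`y j = (1/k j) • (sum of basis vectors of block j)` has `ℓ¹`-norm one, and the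
argument list of the `m`-linear form repeats `y j` exactly `k j` times. -/
theorem stmt_3 (m n : ℕ) (hn : 0 < n) (k : Fin n → ℕ) (hk : ∀ j, 0 < k j)
    (hsum : ∑ j, k j = m) (b : Fin m → Fin n)
    (hb : ∀ j, (Finset.univ.filter fun i => b i = j).card = k j)
    (y : Fin n → Fin m → ℝ)
    (hy : ∀ j i, y j i = if b i = j then 1 / (k j : ℝ) else 0) :
    (1 / (Nat.factorial m : ℝ)) *
      ∑ σ : Equiv.Perm (Fin m), ∏ i, y (b i) (σ i) =
    (1 / (Nat.factorial m : ℝ)) *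
      ((∏ j, (Nat.factorial (k j) : ℝ)) / ∏ j, (k j : ℝ) ^ (k j)) := by
  congr 1
  have hcard : ∀ j : Fin n, Fintype.card {i // b i = j} = k j := fun j => by
    rw [Fintype.card_subtype, hb j]
  -- card of fiber-preserving perms
  have hS : (Finset.univ.filter fun σ : Equiv.Perm (Fin m) => ∀ i, b (σ i) = b i).card
      = ∏ j, Nat.factorial (k j) := by
    rw [← Fintype.card_subtype, Fintype.card_congr (fiberPermEquiv b), Fintype.card_pi]
    exact Finset.prod_congr rfl fun j _ => by rw [Fintype.card_perm, hcard j]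
  -- split the sum
  rw [← Finset.sum_filter_add_sum_filter_not Finset.univ
    (fun σ : Equiv.Perm (Fin m) => ∀ i, b (σ i) = b i)]
  have h2 : ∀ σ ∈ (Finset.univ.filter fun σ : Equiv.Perm (Fin m) => ¬ ∀ i, b (σ i) = b i),
      ∏ i, y (b i) (σ i) = 0 := by
    intro σ hσ
    simp only [Finset.mem_filter, not_forall] at hσ
    obtain ⟨i, hi⟩ := hσ.2
    exact Finset.prod_eq_zero (Finset.mem_univ i) (by rw [hy]; simp [hi])
  rw [Finset.sum_eq_zero h2, add_zero]
  have h1 : ∀ σ ∈ (Finset.univ.filter fun σ : Equiv.Perm (Fin m) => ∀ i, b (σ i) = b i),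
      ∏ i, y (b i) (σ i) = ∏ j, (1 / (k j : ℝ)) ^ (k j) := by
    intro σ hσ
    simp only [Finset.mem_filter] at hσ
    have : ∀ i, y (b i) (σ i) = 1 / (k (b i) : ℝ) := fun i => by
      rw [hy]; simp [hσ.2 i]
    calc ∏ i, y (b i) (σ i) = ∏ i, 1 / (k (b i) : ℝ) := Finset.prod_congr rfl fun i _ => this i
      _ = ∏ j, ∏ i ∈ Finset.univ.filter fun i => b i = j, 1 / (k (b i) : ℝ) := by
            rw [Finset.prod_fiberwise_of_maps_to (fun i _ => Finset.mem_univ (b i))]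
      _ = ∏ j, (1 / (k j : ℝ)) ^ (k j) := Finset.prod_congr rfl fun j _ => by
            rw [Finset.prod_congr rfl (fun i hi => by
              rw [(Finset.mem_filter.mp hi).2]), Finset.prod_const, hb j]
  rw [Finset.sum_congr rfl h1, Finset.sum_const, hS, nsmul_eq_mul]
  push_cast
  rw [← Finset.prod_div_distrib]
  rw [← Finset.prod_mul_distrib]
  exact Finset.prod_congr rfl fun j _ => by
    rw [div_pow, one_pow, mul_one_div]
end

section
/- Let X, Y be real normed linear spaces and L: X^m → Y a continuous symmetric m-linear map with associated m-homogeneous polynomial L̂. Let k_1,...,k_n be nonnegative integers with k_1 + ⋯ + k_n = m. If x_1,...,x_n are vectors in X with ‖x_i‖ ≤ 1, then ‖L(x_1^{k_1} ⋯ x_n^{k_n})‖ ≤ (k_1^{k_1} ⋯ k_n^{k_n} / m!) · n^m · ‖L̂‖. -/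
open Finset

private def sg (t : Bool) : ℝ := if t then 1 else -1

private lemma abs_sg (t : Bool) : |sg t| = 1 := by cases t <;> simp [sg]

private lemma key_count {m : ℕ} (f : Fin m → Fin m) :
    ∑ ε : Fin m → Bool, ∏ i, (sg (ε i) * sg (ε (f i))) =
      if Function.Bijective f then (2:ℝ)^m else 0 := by
  classical
  obtain ⟨d, hd⟩ : ∃ d : Fin m → ℕ, ∀ j, d j = #(univ.filter fun i => f i = j) :=
    ⟨_, fun _ => rfl⟩
  have hsumd : ∑ j, d j = m := by
    have := Finset.card_eq_sum_card_fiberwise (f := f) (s := univ) (t := univ)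
      (fun x _ => mem_univ _)
    rw [Finset.card_univ, Fintype.card_fin] at this
    rw [Finset.sum_congr rfl fun j _ => hd j]
    exact this.symm
  have step1 : ∀ ε : Fin m → Bool,
      ∏ i, (sg (ε i) * sg (ε (f i))) = ∏ j, sg (ε j) ^ (1 + d j) := by
    intro ε
    rw [Finset.prod_mul_distrib]
    have h2 : ∏ i, sg (ε (f i)) = ∏ j, sg (ε j) ^ d j := by
      rw [← Finset.prod_fiberwise_of_maps_to (g := f) (t := univ)
        (fun x _ => mem_univ _) (fun i => sg (ε (f i)))]
      refine Finset.prod_congr rfl fun j _ => ?_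
      rw [Finset.prod_congr rfl (fun i hi => ?_), Finset.prod_const, ← hd]
      · rw [(mem_filter.mp hi).2]
    rw [h2, ← Finset.prod_mul_distrib]
    exact Finset.prod_congr rfl fun j _ => by rw [pow_add, pow_one]
  have step2 : ∑ ε : Fin m → Bool, ∏ j, sg (ε j) ^ (1 + d j)
      = ∏ j, (1 + (-1:ℝ) ^ (1 + d j)) := by
    have := Finset.prod_univ_sum (fun _ : Fin m => (univ : Finset Bool))
      (fun j t => sg t ^ (1 + d j))
    rw [Fintype.piFinset_univ] at this
    rw [← this]
    refine Finset.prod_congr rfl fun j _ => ?_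
    simp [sg]
  rw [Finset.sum_congr rfl fun ε _ => step1 ε, step2]
  by_cases hodd : ∀ j, d j % 2 = 1
  · have hone : ∀ j, 1 ≤ d j := by
      intro j; have := hodd j; omega
    have hall : ∀ j, d j = 1 := by
      by_contra h
      push_neg at h
      obtain ⟨j0, hj0⟩ := h
      have : (∑ j : Fin m, 1) < ∑ j, d j := by
        refine Finset.sum_lt_sum (fun j _ => hone j) ⟨j0, mem_univ _, ?_⟩
        have h1 := hodd j0
        omega
      simp [hsumd] at this
    have hbij : Function.Bijective f := by
      have hinj : Function.Injective f := by
        intro a b hab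
        have ha : a ∈ univ.filter fun i => f i = f b := by simp [hab]
        have hbm : b ∈ univ.filter fun i => f i = f b := by simp
        have hcard : #(univ.filter fun i => f i = f b) ≤ 1 := by
          have h := hall (f b); rw [hd] at h; omega
        exact Finset.card_le_one.mp hcard a ha b hbm
      exact Finite.injective_iff_bijective.mp hinj
    rw [if_pos hbij]
    rw [Finset.prod_congr rfl fun j _ => by rw [hall j]]
    norm_num
  · push_neg at hodd
    obtain ⟨j0, hj0⟩ := hodd
    have heven : Even (d j0) := Nat.even_iff.mpr (by omega)
    have hfac : (1 + (-1:ℝ) ^ (1 + d j0)) = 0 := by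
      have : Odd (1 + d j0) := by
        rcases heven with ⟨c, hc⟩; exact ⟨c, by omega⟩
      rw [this.neg_one_pow]; ring
    have hnb : ¬ Function.Bijective f := by
      intro hf
      have : d j0 = 1 := by
        rw [hd, Finset.card_eq_one]
        refine ⟨(Equiv.ofBijective f hf).symm j0, ?_⟩
        ext i
        simp only [mem_filter, mem_univ, true_and, mem_singleton]
        constructor
        · intro hi
          have : f ((Equiv.ofBijective f hf).symm j0) = j0 :=
            (Equiv.ofBijective f hf).apply_symm_apply j0
          exact hf.injective (by rw [hi, this])
        · intro hi; rw [hi]; exact (Equiv.ofBijective f hf).apply_symm_apply j0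
      omega
    rw [if_neg hnb]
    exact Finset.prod_eq_zero (mem_univ j0) hfac

private lemma polarization {X Y : Type*} [NormedAddCommGroup X] [NormedSpace ℝ X]
    [NormedAddCommGroup Y] [NormedSpace ℝ Y] {m : ℕ}
    (L : ContinuousMultilinearMap ℝ (fun _ : Fin m => X) Y)
    (hsymm : ∀ (σ : Equiv.Perm (Fin m)) (v : Fin m → X),
      L (fun i => v (σ i)) = L v)
    (v : Fin m → X) :
    ∑ ε : Fin m → Bool, (∏ i, sg (ε i)) • L (fun _ => ∑ j, sg (ε j) • v j)
      = ((2:ℝ)^m * m.factorial) • L v := by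
  classical
  have expand : ∀ ε : Fin m → Bool,
      L (fun _ => ∑ j, sg (ε j) • v j)
        = ∑ f : Fin m → Fin m, (∏ i, sg (ε (f i))) • L (fun i => v (f i)) := by
    intro ε
    rw [L.map_sum (fun _ j => sg (ε j) • v j)]
    exact Finset.sum_congr rfl fun f _ =>
      L.map_smul_univ (fun i => sg (ε (f i))) (fun i => v (f i))
  calc ∑ ε : Fin m → Bool, (∏ i, sg (ε i)) • L (fun _ => ∑ j, sg (ε j) • v j)
      = ∑ ε : Fin m → Bool, ∑ f : Fin m → Fin m,
          (∏ i, (sg (ε i) * sg (ε (f i)))) • L (fun i => v (f i)) := by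
        refine Finset.sum_congr rfl fun ε _ => ?_
        rw [expand ε, Finset.smul_sum]
        exact Finset.sum_congr rfl fun f _ => by
          rw [smul_smul, ← Finset.prod_mul_distrib]
    _ = ∑ f : Fin m → Fin m,
          (∑ ε : Fin m → Bool, ∏ i, (sg (ε i) * sg (ε (f i)))) • L (fun i => v (f i)) := by
        rw [Finset.sum_comm]
        exact Finset.sum_congr rfl fun f _ => (Finset.sum_smul).symm
    _ = ∑ f : Fin m → Fin m,
          (if Function.Bijective f then (2:ℝ)^m else 0) • L (fun i => v (f i)) := by
        exact Finset.sum_congr rfl fun f _ => by rw [key_count]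
    _ = ∑ f ∈ univ.filter (fun f : Fin m → Fin m => Function.Bijective f),
          (2:ℝ)^m • L (fun i => v (f i)) := by
        rw [Finset.sum_filter]
        exact Finset.sum_congr rfl fun f _ => by
          split <;> simp
    _ = ∑ f ∈ univ.filter (fun f : Fin m → Fin m => Function.Bijective f),
          (2:ℝ)^m • L v := by
        refine Finset.sum_congr rfl fun f hf => ?_
        have hbf := (mem_filter.mp hf).2
        have h := hsymm (Equiv.ofBijective f hbf) v
        simp only [Equiv.ofBijective_apply] at h
        rw [h]
    _ = ((2:ℝ)^m * m.factorial) • L v := by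
        rw [Finset.sum_const]
        have hcard : #(univ.filter fun f : Fin m → Fin m => Function.Bijective f)
            = m.factorial := by
          have e : Equiv.Perm (Fin m) ≃ {f : Fin m → Fin m // Function.Bijective f} :=
            { toFun := fun σ => ⟨σ, σ.bijective⟩
              invFun := fun f => Equiv.ofBijective f.1 f.2
              left_inv := fun σ => Equiv.ext fun i => rfl
              right_inv := fun f => rfl }
          rw [← Fintype.card_subtype, ← Fintype.card_congr e, Fintype.card_perm,
            Fintype.card_fin]
        rw [hcard, ← Nat.cast_smul_eq_nsmul ℝ, smul_smul, mul_comm]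

/-- for a continuous symmetric `m`-linear map `L : X^m → Y`
between real normed spaces and vectors `x₁,…,x_n` of norm at most one,
`‖L(x₁^{k₁} ⋯ x_n^{k_n})‖ ≤ (k₁^{k₁}⋯k_n^{k_n}/m!) · n^m · ‖L̂‖`,
the repetitions being encoded by a block map `b : Fin m → Fin n` with
`k j` indices in block `j`. -/
theorem stmt_6 {X Y : Type*} [NormedAddCommGroup X] [NormedSpace ℝ X]
    [NormedAddCommGroup Y] [NormedSpace ℝ Y] (m n : ℕ) (hm : 0 < m)
    (hn : 0 < n)
    (L : ContinuousMultilinearMap ℝ (fun _ : Fin m => X) Y)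
    (hsymm : ∀ (σ : Equiv.Perm (Fin m)) (v : Fin m → X),
      L (fun i => v (σ i)) = L v)
    (k : Fin n → ℕ) (hsum : ∑ j, k j = m)
    (x : Fin n → X) (hx : ∀ j, ‖x j‖ ≤ 1)
    (b : Fin m → Fin n)
    (hb : ∀ j, (Finset.univ.filter fun i => b i = j).card = k j) :
    ‖L (fun i => x (b i))‖ ≤
      ((∏ j, (k j : ℝ) ^ (k j)) / (Nat.factorial m : ℝ)) * (n : ℝ) ^ m *
        sSup {r : ℝ | ∃ z : X, ‖z‖ ≤ 1 ∧ r = ‖L (fun _ => z)‖} := by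
  classical
  set S := sSup {r : ℝ | ∃ z : X, ‖z‖ ≤ 1 ∧ r = ‖L (fun _ => z)‖} with hS
  -- the sup bounds the diagonal values
  have hbdd : BddAbove {r : ℝ | ∃ z : X, ‖z‖ ≤ 1 ∧ r = ‖L (fun _ => z)‖} := by
    refine ⟨‖L‖, ?_⟩
    rintro r ⟨z, hz, rfl⟩
    calc ‖L (fun _ => z)‖ ≤ ‖L‖ * ∏ _i : Fin m, ‖z‖ := L.le_opNorm _
      _ ≤ ‖L‖ * 1 := by
          refine mul_le_mul_of_nonneg_left ?_ (norm_nonneg L)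
          rw [Finset.prod_const]
          exact pow_le_one₀ (norm_nonneg z) hz
      _ = ‖L‖ := mul_one _
  have hSub : ∀ z : X, ‖z‖ ≤ 1 → ‖L (fun _ => z)‖ ≤ S :=
    fun z hz => le_csSup hbdd ⟨z, hz, rfl⟩
  have hS0 : 0 ≤ S :=
    le_trans (norm_nonneg _) (hSub 0 (by simp))
  have hn' : (0:ℝ) < n := by exact_mod_cast hn
  -- diagonal bound for vectors of norm ≤ n
  have hdiag : ∀ z : X, ‖z‖ ≤ (n:ℝ) → ‖L (fun _ => z)‖ ≤ (n:ℝ)^m * S := by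
    intro z hzn
    set w := (n:ℝ)⁻¹ • z with hw
    have hwn : ‖w‖ ≤ 1 := by
      rw [hw, norm_smul, norm_inv, Real.norm_natCast]
      rw [inv_mul_le_iff₀ hn', mul_one]
      exact hzn
    have hzw : z = (n:ℝ) • w := (smul_inv_smul₀ (ne_of_gt hn') z).symm
    calc ‖L (fun _ => z)‖ = ‖L (fun _ => (n:ℝ) • w)‖ := by rw [← hzw]
      _ = ‖(∏ _i : Fin m, (n:ℝ)) • L (fun _ => w)‖ := by
          rw [L.map_smul_univ (fun _ => (n:ℝ)) (fun _ => w)]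
      _ = (n:ℝ)^m * ‖L (fun _ => w)‖ := by
          rw [norm_smul, Finset.prod_const, Finset.card_univ, Fintype.card_fin]
          rw [Real.norm_eq_abs, abs_pow, abs_of_nonneg (le_of_lt hn')]
      _ ≤ (n:ℝ)^m * S := by
          exact mul_le_mul_of_nonneg_left (hSub w hwn) (by positivity)
  -- positivity of the multiplicities along b
  have hkpos : ∀ i : Fin m, 0 < k (b i) := by
    intro i
    rw [← hb (b i)]
    exact Finset.card_pos.mpr ⟨i, by simp⟩
  set v : Fin m → X := fun i => ((k (b i) : ℝ))⁻¹ • x (b i) with hv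
  -- rescaling identity
  have h1 : L (fun i => x (b i)) = (∏ i, (k (b i):ℝ)) • L v := by
    have hxv : ∀ i, x (b i) = (k (b i):ℝ) • v i := by
      intro i
      rw [hv]
      exact (smul_inv_smul₀ (by exact_mod_cast (hkpos i).ne') _).symm
    calc L (fun i => x (b i)) = L (fun i => (k (b i):ℝ) • v i) := by
          exact congrArg L (funext fun i => hxv i)
      _ = (∏ i, (k (b i):ℝ)) • L v := L.map_smul_univ _ _
  have h2 : ∏ i, (k (b i):ℝ) = ∏ j, (k j:ℝ)^(k j) := by
    rw [← Finset.prod_fiberwise_of_maps_to (g := b) (t := univ)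
      (fun x _ => mem_univ _) (fun i => (k (b i):ℝ))]
    refine Finset.prod_congr rfl fun j _ => ?_
    rw [Finset.prod_congr rfl (fun i hi => ?_), Finset.prod_const, hb]
    · rw [(mem_filter.mp hi).2]
  -- norm bound on the polarization points
  have hzbound : ∀ ε : Fin m → Bool, ‖∑ j, sg (ε j) • v j‖ ≤ (n:ℝ) := by
    intro ε
    have hz : ∑ j, sg (ε j) • v j
        = ∑ j' : Fin n,
            ((∑ i ∈ univ.filter (fun i => b i = j'), sg (ε i)) * (k j' : ℝ)⁻¹) • x j' := by
      rw [← Finset.sum_fiberwise_of_maps_to (g := b) (t := univ)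
        (fun x _ => mem_univ _) (fun i => sg (ε i) • v i)]
      refine Finset.sum_congr rfl fun j' _ => ?_
      calc ∑ i ∈ univ.filter (fun i => b i = j'), sg (ε i) • v i
          = ∑ i ∈ univ.filter (fun i => b i = j'),
              (sg (ε i) * (k j' : ℝ)⁻¹) • x j' := by
            refine Finset.sum_congr rfl fun i hi => ?_
            have hbi : b i = j' := (mem_filter.mp hi).2
            rw [hv]
            simp only [hbi, smul_smul]
        _ = ((∑ i ∈ univ.filter (fun i => b i = j'), sg (ε i)) * (k j' : ℝ)⁻¹) • x j' := by
            rw [← Finset.sum_smul, Finset.sum_mul]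
    rw [hz]
    calc ‖∑ j' : Fin n,
            ((∑ i ∈ univ.filter (fun i => b i = j'), sg (ε i)) * (k j' : ℝ)⁻¹) • x j'‖
        ≤ ∑ j' : Fin n,
            ‖((∑ i ∈ univ.filter (fun i => b i = j'), sg (ε i)) * (k j' : ℝ)⁻¹) • x j'‖ :=
          norm_sum_le _ _
      _ ≤ ∑ _j' : Fin n, (1:ℝ) := by
          refine Finset.sum_le_sum fun j' _ => ?_
          rw [norm_smul]
          have hc : ‖(∑ i ∈ univ.filter (fun i => b i = j'), sg (ε i)) * (k j' : ℝ)⁻¹‖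
              ≤ 1 := by
            rw [Real.norm_eq_abs, abs_mul]
            have habs : |∑ i ∈ univ.filter (fun i => b i = j'), sg (ε i)| ≤ (k j' : ℝ) := by
              calc |∑ i ∈ univ.filter (fun i => b i = j'), sg (ε i)|
                  ≤ ∑ i ∈ univ.filter (fun i => b i = j'), |sg (ε i)| :=
                    Finset.abs_sum_le_sum_abs _ _
                _ = (k j' : ℝ) := by
                    rw [Finset.sum_congr rfl (fun i _ => abs_sg (ε i)),
                      Finset.sum_const, hb]
                    simp
            rcases Nat.eq_zero_or_pos (k j') with hk0 | hk0
            · have : |∑ i ∈ univ.filter (fun i => b i = j'), sg (ε i)| ≤ 0 := by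
                rw [hk0] at habs; exact_mod_cast habs
              have h0 : |∑ i ∈ univ.filter (fun i => b i = j'), sg (ε i)| = 0 :=
                le_antisymm this (abs_nonneg _)
              rw [h0, zero_mul]
              norm_num
            · have hkR : (0:ℝ) < (k j' : ℝ) := by exact_mod_cast hk0
              rw [abs_inv, Nat.abs_cast]
              rw [← div_eq_mul_inv, div_le_one hkR]
              exact habs
          calc ‖(∑ i ∈ univ.filter (fun i => b i = j'), sg (ε i)) * (k j' : ℝ)⁻¹‖ * ‖x j'‖
              ≤ 1 * 1 := mul_le_mul hc (hx j') (norm_nonneg _) zero_le_one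
            _ = 1 := one_mul 1
      _ = (n:ℝ) := by simp
  -- use polarization
  have hpol := polarization L hsymm v
  have hLv : (Nat.factorial m : ℝ) * ‖L v‖ ≤ (n:ℝ)^m * S := by
    have h2m : (0:ℝ) < (2:ℝ)^m := by positivity
    have hnorm : ((2:ℝ)^m * (Nat.factorial m : ℝ)) * ‖L v‖
        ≤ (2:ℝ)^m * ((n:ℝ)^m * S) := by
      have hl : ‖((2:ℝ)^m * (Nat.factorial m : ℝ)) • L v‖
          = ((2:ℝ)^m * (Nat.factorial m : ℝ)) * ‖L v‖ := by
        rw [norm_smul, Real.norm_eq_abs, abs_of_nonneg (by positivity)]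
      rw [← hl, ← hpol]
      calc ‖∑ ε : Fin m → Bool, (∏ i, sg (ε i)) • L (fun _ => ∑ j, sg (ε j) • v j)‖
          ≤ ∑ ε : Fin m → Bool, ‖(∏ i, sg (ε i)) • L (fun _ => ∑ j, sg (ε j) • v j)‖ :=
            norm_sum_le _ _
        _ ≤ ∑ _ε : Fin m → Bool, (n:ℝ)^m * S := by
            refine Finset.sum_le_sum fun ε _ => ?_
            rw [norm_smul, Real.norm_eq_abs, Finset.abs_prod]
            rw [Finset.prod_congr rfl (fun i _ => abs_sg (ε i)), Finset.prod_const_one,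
              one_mul]
            exact hdiag _ (hzbound ε)
        _ = (2:ℝ)^m * ((n:ℝ)^m * S) := by
            rw [Finset.sum_const, Finset.card_univ]
            rw [nsmul_eq_mul]
            congr 1
            rw [Fintype.card_fun, Fintype.card_bool, Fintype.card_fin]
            push_cast
            ring
    nlinarith [norm_nonneg (L v), hS0]
  -- finish
  have hfac : (0:ℝ) < (Nat.factorial m : ℝ) := by
    exact_mod_cast Nat.factorial_pos m
  have hprod : (0:ℝ) ≤ ∏ j, (k j:ℝ)^(k j) := by positivity
  calc ‖L (fun i => x (b i))‖ = (∏ j, (k j:ℝ)^(k j)) * ‖L v‖ := by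
        rw [h1, norm_smul, h2, Real.norm_eq_abs, abs_of_nonneg hprod]
    _ ≤ (∏ j, (k j:ℝ)^(k j)) * (((n:ℝ)^m * S) / (Nat.factorial m : ℝ)) := by
        refine mul_le_mul_of_nonneg_left ?_ hprod
        rw [le_div_iff₀ hfac, mul_comm]
        exact hLv
    _ = ((∏ j, (k j : ℝ) ^ (k j)) / (Nat.factorial m : ℝ)) * (n : ℝ) ^ m * S := by
        ring
end

section
/- Let L: (ℓ^p)^m → ℝ be a continuous symmetric m-linear map with associated polynomial L̂, where 1 ≤ p < m. If x_1, ..., x_n are norm-one vectors in ℓ^p with pairwise disjoint supports and k_1,...,k_n are nonnegative integers summing to m, then |L(x_1^{k_1} ⋯ x_n^{k_n})| ≤ (n^{(m-p)/p} · m · 2^{m/2} Γ(m/2) · m^{m/2} / m!) · ‖L̂‖. -/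
/-!
Write `kⱼ` for the size of the fibre `b⁻¹(j)`. Polarization expresses
`2^m m! L(x_{b 1}, …, x_{b m})` as the signed sum over all sign vectors `ε ∈ {±1}^m` of
`L̂(∑ᵢ εᵢ x_{b i}) = L̂(∑ⱼ cⱼ(ε) xⱼ)`, where `cⱼ(ε)` is the Rademacher sum of the `kⱼ` signs indexed
by `b⁻¹(j)`. As the `xⱼ` are disjointly supported unit vectors of `ℓ^p`, the power-mean inequality
gives `‖∑ⱼ cⱼ xⱼ‖^m ≤ n^{m/p - 1} ∑ⱼ |cⱼ|^m`. Averaged over `ε`, `|cⱼ|^m` is at most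
`m 2^{m/2} Γ(m/2) kⱼ^{m/2}`: this follows from Hoeffding's bound `E exp(λ cⱼ) ≤ exp(kⱼ λ²/2)` at
`λ = √(m/kⱼ)`, together with `t^m ≤ (m/e)^m e^t` and `(x/e)^x ≤ Γ(x+1)`. Finally
`∑ⱼ kⱼ^{m/2} ≤ m^{m/2}` since `m/2 ≥ 1`.
-/

open Finset Real
open scoped ENNReal

noncomputable def boolSign (b : Bool) : ℝ := cond b 1 (-1)

lemma abs_boolSign (b : Bool) : |boolSign b| = 1 := by cases b <;> simp [boolSign]

lemma sum_boolSign_pow (n : ℕ) : ∑ b, boolSign b ^ n = 1 + (-1) ^ n := by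
  simp [boolSign]

lemma sum_rpow_le_rpow_sum {κ : Type*} {s : Finset κ} {f : κ → ℝ} (hf : ∀ i ∈ s, 0 ≤ f i)
    {r : ℝ} (hr : 1 ≤ r) : ∑ i ∈ s, f i ^ r ≤ (∑ i ∈ s, f i) ^ r := by
  have hS : 0 ≤ ∑ i ∈ s, f i := sum_nonneg hf
  calc ∑ i ∈ s, f i ^ r = ∑ i ∈ s, f i * f i ^ (r - 1) := by
        refine sum_congr rfl fun i hi => ?_
        rw [← rpow_one_add' (hf i hi) (by linarith), add_sub_cancel]
    _ ≤ ∑ i ∈ s, f i * (∑ i ∈ s, f i) ^ (r - 1) := sum_le_sum fun i hi =>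
        mul_le_mul_of_nonneg_left
          (rpow_le_rpow (hf i hi) (single_le_sum hf hi) (by linarith)) (hf i hi)
    _ = (∑ i ∈ s, f i) ^ r := by
        rw [← sum_mul, ← rpow_one_add' hS (by linarith), add_sub_cancel]

lemma sum_smul_comp_eq_sum_fiber_smul {ι κ M : Type*} [Fintype ι] [Fintype κ] [DecidableEq κ]
    [AddCommMonoid M] [Module ℝ M] (a : ι → ℝ) (b : ι → κ) (x : κ → M) :
    ∑ i, a i • x (b i) = ∑ j, (∑ i ∈ {i | b i = j}, a i) • x j := by
  rw [← sum_fiberwise univ b]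
  refine sum_congr rfl fun j _ => ?_
  rw [sum_smul]
  exact sum_congr rfl fun i hi => by rw [(mem_filter.1 hi).2]

lemma pow_le_div_exp_pow_mul_exp (m : ℕ) {t : ℝ} (ht : 0 ≤ t) :
    t ^ m ≤ (m / exp 1) ^ m * exp t := by
  rcases m.eq_zero_or_pos with rfl | hm
  · simpa using ht
  have hmR : (0 : ℝ) < m := Nat.cast_pos.2 hm
  have hdiv : t / m ≤ exp (t / m - 1) := by linarith [add_one_le_exp (t / m - 1)]
  calc t ^ m = m ^ m * (t / m) ^ m := by rw [← mul_pow, mul_div_cancel₀ _ hmR.ne']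
    _ ≤ m ^ m * exp (t / m - 1) ^ m := by gcongr
    _ = (m / exp 1) ^ m * exp t := by
        rw [← exp_nat_mul, mul_sub, mul_div_cancel₀ _ hmR.ne', exp_sub, div_pow, exp_one_pow,
          mul_one]
        ring

open MeasureTheory Set in
theorem Real.rpow_div_exp_le_Gamma_add_one {x : ℝ} (hx : 0 < x) :
    (x / exp 1) ^ x ≤ Gamma (x + 1) := by
  have hΓ := GammaIntegral_convergent (s := x + 1) (by positivity)
  simp only [add_sub_cancel_right] at hΓ
  calc (x / exp 1) ^ x = ∫ t in Ioi x, exp (-t) * x ^ x := by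
        rw [integral_mul_const, integral_exp_neg_Ioi, div_rpow hx.le (exp_pos 1).le,
          exp_one_rpow, exp_neg]
        ring
    _ ≤ ∫ t in Ioi x, exp (-t) * t ^ x :=
        setIntegral_mono_on ((integrableOn_exp_neg_Ioi x).mul_const _)
          (hΓ.mono_set (Ioi_subset_Ioi hx.le)) measurableSet_Ioi fun t ht =>
          mul_le_mul_of_nonneg_left (rpow_le_rpow hx.le (le_of_lt ht) hx.le) (exp_pos _).le
    _ ≤ ∫ t in Ioi 0, exp (-t) * t ^ x :=
        setIntegral_mono_set hΓ
          (ae_restrict_of_forall_mem measurableSet_Ioi fun t ht =>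
            mul_nonneg (exp_pos _).le (rpow_nonneg (le_of_lt ht) _))
          (Ioi_subset_Ioi hx.le).eventuallyLE
    _ = Gamma (x + 1) := by rw [Gamma_eq_integral (by positivity), add_sub_cancel_right]

lemma two_mul_div_exp_rpow_le {r : ℝ} (hr : 0 < r) :
    2 * (r / exp 1) ^ (r / 2) ≤ r * 2 ^ (r / 2) * Gamma (r / 2) := by
  have h := rpow_div_exp_le_Gamma_add_one (half_pos hr)
  rw [Gamma_add_one (half_pos hr).ne', div_div, mul_comm 2 (exp 1), ← div_div,
    div_rpow (div_nonneg hr.le (exp_pos 1).le) zero_le_two] at h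
  have h2 : (0 : ℝ) < 2 ^ (r / 2) := by positivity
  rw [div_le_iff₀ h2] at h
  linarith

lemma div_exp_pow_mul_exp_half (m : ℕ) :
    ((m : ℝ) / exp 1) ^ m * exp ((m : ℝ) / 2) =
      ((m : ℝ) / exp 1) ^ ((m : ℝ) / 2) * (m : ℝ) ^ ((m : ℝ) / 2) := by
  rcases m.eq_zero_or_pos with rfl | hm
  · simp
  have hpos : (0 : ℝ) < m / exp 1 := by positivity
  have hsplit : ((m : ℝ) / exp 1) ^ m =
      ((m : ℝ) / exp 1) ^ ((m : ℝ) / 2) * ((m : ℝ) / exp 1) ^ ((m : ℝ) / 2) := by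
    rw [← rpow_add hpos, add_halves, rpow_natCast]
  rw [hsplit, mul_assoc, ← exp_one_rpow ((m : ℝ) / 2), ← mul_rpow hpos.le (exp_pos 1).le,
    div_mul_cancel₀ _ (exp_pos 1).ne']

section SignVectors

variable {ι : Type*} [Fintype ι] [DecidableEq ι]

lemma prod_boolSign_comp (ε : ι → Bool) (r : ι → ι) :
    ∏ i, boolSign (ε (r i)) = ∏ j, boolSign (ε j) ^ #{i | r i = j} := by
  simp_rw [← Finset.prod_fiberwise' univ r (fun j => boolSign (ε j)), prod_const]

lemma sum_prod_boolSign_mul_prod_boolSign_comp (r : ι → ι) :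
    ∑ ε : ι → Bool, (∏ i, boolSign (ε i)) * ∏ i, boolSign (ε (r i)) =
      if Function.Bijective r then 2 ^ Fintype.card ι else 0 := by
  have h (ε : ι → Bool) : (∏ i, boolSign (ε i)) * ∏ i, boolSign (ε (r i)) =
      ∏ j, boolSign (ε j) ^ (#{i | r i = j} + 1) := by
    rw [prod_boolSign_comp ε r, ← prod_mul_distrib]
    exact prod_congr rfl fun j _ => (pow_succ' _ _).symm
  rw [Fintype.sum_congr _ _ h, ← Fintype.prod_sum fun j b => boolSign b ^ (#{i | r i = j} + 1)]
  simp_rw [sum_boolSign_pow]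
  split_ifs with hr
  · have hfiber (j : ι) : #{i | r i = j} = 1 := by
      rw [card_eq_one]
      exact ⟨(Equiv.ofBijective r hr).symm j, by ext i; simp [Equiv.eq_symm_apply]⟩
    norm_num [hfiber]
  · obtain ⟨j, hj⟩ : ∃ j, Even #{i | r i = j} := by
      by_contra! hodd
      refine hr ((Fintype.bijective_iff_surjective_and_card r).2 ⟨fun j => ?_, rfl⟩)
      obtain ⟨i, hi⟩ := card_pos.1 (Nat.not_even_iff_odd.1 (hodd j)).pos
      exact ⟨i, (mem_filter.1 hi).2⟩
    exact prod_eq_zero (mem_univ j) (by rw [hj.add_one.neg_one_pow]; norm_num)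

lemma card_filter_bijective :
    #{r : ι → ι | Function.Bijective r} = (Fintype.card ι).factorial := by
  rw [← Fintype.card_subtype, Fintype.card_congr Equiv.bijectiveEquiv, ← Fintype.card_perm]

theorem MultilinearMap.sum_prod_boolSign_smul_apply_sum {M N : Type*} [AddCommGroup M]
    [Module ℝ M] [AddCommGroup N] [Module ℝ N] (f : MultilinearMap ℝ (fun _ : ι => M) N)
    (hf : ∀ (σ : Equiv.Perm ι) (v : ι → M), f (fun i => v (σ i)) = f v) (v : ι → M) :
    ∑ ε : ι → Bool, (∏ i, boolSign (ε i)) • f (fun _ => ∑ i, boolSign (ε i) • v i) =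
      ((2 : ℝ) ^ Fintype.card ι * (Fintype.card ι).factorial) • f v := by
  have expand (c : ι → ℝ) : f (fun _ => ∑ i, c i • v i) =
      ∑ r : ι → ι, (∏ j, c (r j)) • f (fun j => v (r j)) := by
    rw [f.map_sum fun _ i => c i • v i]
    exact sum_congr rfl fun r _ => f.map_smul_univ _ _
  calc ∑ ε : ι → Bool, (∏ i, boolSign (ε i)) • f (fun _ => ∑ i, boolSign (ε i) • v i)
      = ∑ r : ι → ι, (∑ ε : ι → Bool, (∏ i, boolSign (ε i)) * ∏ i, boolSign (ε (r i))) •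
          f (fun j => v (r j)) := by
        simp_rw [expand, smul_sum, smul_smul, sum_smul]
        exact sum_comm
    _ = ∑ r : ι → ι, if Function.Bijective r then (2 : ℝ) ^ Fintype.card ι • f v else 0 := by
        refine sum_congr rfl fun r _ => ?_
        rw [sum_prod_boolSign_mul_prod_boolSign_comp]
        split_ifs with hr
        · exact congrArg _ (hf (Equiv.ofBijective r hr) v)
        · exact zero_smul _ _
    _ = ((2 : ℝ) ^ Fintype.card ι * (Fintype.card ι).factorial) • f v := by
        rw [← sum_filter, sum_const, card_filter_bijective, ← Nat.cast_smul_eq_nsmul ℝ, smul_smul,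
          mul_comm]

theorem MultilinearMap.two_pow_mul_factorial_mul_abs_le {M : Type*} [AddCommGroup M]
    [Module ℝ M] (f : MultilinearMap ℝ (fun _ : ι => M) ℝ)
    (hf : ∀ (σ : Equiv.Perm ι) (v : ι → M), f (fun i => v (σ i)) = f v) (v : ι → M) :
    2 ^ Fintype.card ι * (Fintype.card ι).factorial * |f v| ≤
      ∑ ε : ι → Bool, |f (fun _ => ∑ i, boolSign (ε i) • v i)| := by
  calc 2 ^ Fintype.card ι * (Fintype.card ι).factorial * |f v|
      = |∑ ε : ι → Bool, (∏ i, boolSign (ε i)) • f (fun _ => ∑ i, boolSign (ε i) • v i)| := by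
        have hpos : (0 : ℝ) < 2 ^ Fintype.card ι * (Fintype.card ι).factorial := by positivity
        rw [f.sum_prod_boolSign_smul_apply_sum hf, smul_eq_mul, abs_mul, abs_of_pos hpos]
    _ ≤ ∑ ε : ι → Bool, |(∏ i, boolSign (ε i)) • f (fun _ => ∑ i, boolSign (ε i) • v i)| :=
        abs_sum_le_sum_abs _ _
    _ = ∑ ε : ι → Bool, |f (fun _ => ∑ i, boolSign (ε i) • v i)| := by
        simp [abs_mul, abs_prod, abs_boolSign]

lemma sum_exp_mul_sum_boolSign_le (T : Finset ι) (μ : ℝ) :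
    ∑ ε : ι → Bool, exp (μ * ∑ i ∈ T, boolSign (ε i)) ≤
      2 ^ Fintype.card ι * exp (#T * μ ^ 2 / 2) := by
  set g : ι → Bool → ℝ := fun i b => exp (μ * if i ∈ T then boolSign b else 0)
  have hg (i : ι) : ∑ b, g i b ≤ 2 * exp (if i ∈ T then μ ^ 2 / 2 else 0) := by
    by_cases hi : i ∈ T
    · simp only [g, hi, if_true, Fintype.sum_bool, boolSign, cond_true, cond_false]
      have hcosh := cosh_le_exp_half_sq μ
      rw [cosh_eq] at hcosh
      rw [mul_one, mul_neg_one]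
      linarith
    · simp [g, hi]
  calc ∑ ε : ι → Bool, exp (μ * ∑ i ∈ T, boolSign (ε i))
      = ∑ ε : ι → Bool, ∏ i, g i (ε i) := by
        simp only [g, ← exp_sum, ← mul_sum, sum_ite_mem, univ_inter]
    _ = ∏ i, ∑ b, g i b := (Fintype.prod_sum g).symm
    _ ≤ ∏ i, 2 * exp (if i ∈ T then μ ^ 2 / 2 else 0) :=
        prod_le_prod (fun i _ => sum_nonneg fun b _ => (exp_pos _).le) fun i _ => hg i
    _ = 2 ^ Fintype.card ι * exp (#T * μ ^ 2 / 2) := by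
        rw [prod_mul_distrib, ← exp_sum, sum_ite_mem, univ_inter, sum_const, prod_const,
          card_univ, nsmul_eq_mul, mul_div_assoc]

lemma pow_mul_sum_abs_sum_boolSign_pow_le (T : Finset ι) (m : ℕ) {μ : ℝ} (hμ : 0 ≤ μ) :
    μ ^ m * ∑ ε : ι → Bool, |∑ i ∈ T, boolSign (ε i)| ^ m ≤
      2 * 2 ^ Fintype.card ι * (m / exp 1) ^ m * exp (#T * μ ^ 2 / 2) := by
  have pointwise (s : ℝ) : μ ^ m * |s| ^ m ≤ (m / exp 1) ^ m * (exp (μ * s) + exp (-μ * s)) := by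
    rw [← mul_pow]
    refine (pow_le_div_exp_pow_mul_exp m (by positivity)).trans (mul_le_mul_of_nonneg_left ?_ ?_)
    · rcases abs_choice s with h | h <;> rw [h]
      · linarith [exp_pos (-μ * s)]
      · rw [mul_neg, ← neg_mul]; linarith [exp_pos (μ * s)]
    · positivity
  calc μ ^ m * ∑ ε : ι → Bool, |∑ i ∈ T, boolSign (ε i)| ^ m
      ≤ (m / exp 1) ^ m * (∑ ε : ι → Bool, exp (μ * ∑ i ∈ T, boolSign (ε i)) +
          ∑ ε : ι → Bool, exp (-μ * ∑ i ∈ T, boolSign (ε i))) := by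
        rw [mul_sum, ← sum_add_distrib, mul_sum]
        exact sum_le_sum fun ε _ => pointwise _
    _ ≤ (m / exp 1) ^ m * (2 ^ Fintype.card ι * exp (#T * μ ^ 2 / 2) +
          2 ^ Fintype.card ι * exp (#T * (-μ) ^ 2 / 2)) := by
        gcongr <;> exact sum_exp_mul_sum_boolSign_le T _
    _ = 2 * 2 ^ Fintype.card ι * (m / exp 1) ^ m * exp (#T * μ ^ 2 / 2) := by
        rw [neg_sq]; ring

theorem sum_abs_sum_boolSign_pow_le (T : Finset ι) {m : ℕ} (hm : m ≠ 0) :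
    ∑ ε : ι → Bool, |∑ i ∈ T, boolSign (ε i)| ^ m ≤
      2 ^ Fintype.card ι * (m * 2 ^ ((m : ℝ) / 2) * Gamma (m / 2)) * (#T : ℝ) ^ ((m : ℝ) / 2) := by
  have hmR : (0 : ℝ) < m := Nat.cast_pos.2 (Nat.pos_of_ne_zero hm)
  rcases (#T).eq_zero_or_pos with hT | hT
  · rw [card_eq_zero.1 hT]
    simp [zero_pow hm, hmR.ne']
  have hTR : (0 : ℝ) < #T := Nat.cast_pos.2 hT
  set μ := √(m / #T) with hμdef
  have hμ : 0 < μ := sqrt_pos.2 (by positivity)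
  have hμsq : #T * μ ^ 2 / 2 = (m : ℝ) / 2 := by rw [sq_sqrt (by positivity)]; field_simp
  have hμpow : μ ^ m = (m : ℝ) ^ ((m : ℝ) / 2) / (#T : ℝ) ^ ((m : ℝ) / 2) := by
    rw [hμdef, sqrt_eq_rpow, ← rpow_natCast, ← rpow_mul (by positivity), div_rpow hmR.le hTR.le]
    ring_nf
  have h := pow_mul_sum_abs_sum_boolSign_pow_le T m hμ.le
  rw [hμsq, mul_assoc _ (_ ^ m), div_exp_pow_mul_exp_half, hμpow] at h
  have hA : (0 : ℝ) < (m : ℝ) ^ ((m : ℝ) / 2) := by positivity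
  have hB : (0 : ℝ) < (#T : ℝ) ^ ((m : ℝ) / 2) := by positivity
  calc ∑ ε : ι → Bool, |∑ i ∈ T, boolSign (ε i)| ^ m
      ≤ 2 ^ Fintype.card ι * (2 * ((m : ℝ) / exp 1) ^ ((m : ℝ) / 2)) *
          (#T : ℝ) ^ ((m : ℝ) / 2) := by
        rw [div_mul_eq_mul_div, div_le_iff₀ hB] at h
        rw [← mul_le_mul_iff_of_pos_left hA]
        linarith
    _ ≤ _ := by gcongr 2 ^ _ * ?_ * _; exact two_mul_div_exp_rpow_le hmR

theorem sum_sum_abs_sum_fiber_boolSign_pow_le {κ : Type*} [Fintype κ] [DecidableEq κ]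
    (b : ι → κ) {m : ℕ} (hm : 2 ≤ m) :
    ∑ ε : ι → Bool, ∑ j, |∑ i ∈ {i | b i = j}, boolSign (ε i)| ^ m ≤
      2 ^ Fintype.card ι * (m * 2 ^ ((m : ℝ) / 2) * Gamma (m / 2)) *
        (Fintype.card ι : ℝ) ^ ((m : ℝ) / 2) := by
  rw [sum_comm]
  calc ∑ j, ∑ ε : ι → Bool, |∑ i ∈ {i | b i = j}, boolSign (ε i)| ^ m
      ≤ ∑ j, 2 ^ Fintype.card ι * (m * 2 ^ ((m : ℝ) / 2) * Gamma (m / 2)) *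
          (#{i | b i = j} : ℝ) ^ ((m : ℝ) / 2) :=
        sum_le_sum fun j _ => sum_abs_sum_boolSign_pow_le _ (by omega)
    _ ≤ 2 ^ Fintype.card ι * (m * 2 ^ ((m : ℝ) / 2) * Gamma (m / 2)) *
          (∑ j, (#{i | b i = j} : ℝ)) ^ ((m : ℝ) / 2) := by
        rw [← mul_sum]
        have hΓ : 0 < Gamma ((m : ℝ) / 2) := Gamma_pos_of_pos (by positivity)
        gcongr
        exact sum_rpow_le_rpow_sum (fun _ _ => Nat.cast_nonneg _) (by
          rw [le_div_iff₀ two_pos]; exact_mod_cast (by omega : 1 * 2 ≤ m))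
    _ = _ := by
        rw [← Nat.cast_sum, ← card_eq_sum_card_fiberwise fun _ _ => mem_univ _, card_univ]

end SignVectors

section lp
variable {α : Type*} {E : α → Type*} [∀ a, NormedAddCommGroup (E a)] [∀ a, NormedSpace ℝ (E a)]
  {ι : Type*} [Fintype ι] {p : ℝ≥0∞}

theorem lp.norm_sum_smul_rpow_of_disjoint (hp : 0 < p.toReal) (x : ι → lp E p)
    (hdisj : ∀ j j', j ≠ j' → ∀ a, x j a = 0 ∨ x j' a = 0) (c : ι → ℝ) :
    ‖∑ j, c j • x j‖ ^ p.toReal = ∑ j, |c j| ^ p.toReal * ‖x j‖ ^ p.toReal := by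
  have pointwise (a : α) :
      ‖(∑ j, c j • x j) a‖ ^ p.toReal = ∑ j, |c j| ^ p.toReal * ‖x j a‖ ^ p.toReal := by
    simp only [lp.coeFn_sum, Finset.sum_apply, lp.coeFn_smul, Pi.smul_apply]
    by_cases h : ∃ j₀, x j₀ a ≠ 0
    · obtain ⟨j₀, hj₀⟩ := h
      have hzero (j : ι) (hj : j ≠ j₀) : x j a = 0 := (hdisj j j₀ hj a).resolve_right hj₀
      rw [sum_eq_single j₀ (fun j _ hj => by rw [hzero j hj, smul_zero]) (by simp),
        sum_eq_single j₀ (fun j _ hj => by simp [hzero j hj, zero_rpow hp.ne'])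
          (by simp), norm_smul, mul_rpow (norm_nonneg _) (norm_nonneg _), Real.norm_eq_abs]
    · simp only [not_exists, not_not] at h
      simp [h, zero_rpow hp.ne']
  refine (lp.hasSum_norm hp _).unique ?_
  simp_rw [pointwise]
  exact hasSum_sum fun j _ => (lp.hasSum_norm hp (x j)).mul_left _

theorem lp.norm_sum_smul_pow_le_of_disjoint [Fact (1 ≤ p)] (hp : p ≠ ∞) (x : ι → lp E p)
    (hx : ∀ j, ‖x j‖ = 1)
    (hdisj : ∀ j j', j ≠ j' → ∀ a, x j a = 0 ∨ x j' a = 0) {m : ℕ} (hpm : p.toReal ≤ m)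
    (c : ι → ℝ) :
    ‖∑ j, c j • x j‖ ^ m ≤ (Fintype.card ι : ℝ) ^ (m / p.toReal - 1) * ∑ j, |c j| ^ m := by
  have hp0 : 0 < p.toReal :=
    ENNReal.toReal_pos (zero_lt_one.trans_le Fact.out).ne' hp
  have hpow {a : ℝ} (ha : 0 ≤ a) : (a ^ p.toReal) ^ (m / p.toReal) = a ^ m := by
    rw [← rpow_mul ha, mul_div_cancel₀ _ hp0.ne', rpow_natCast]
  have hnorm := lp.norm_sum_smul_rpow_of_disjoint hp0 x hdisj c
  simp only [hx, one_rpow, mul_one] at hnorm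
  rw [← hpow (norm_nonneg _), hnorm]
  simp_rw [← hpow (abs_nonneg (c _))]
  exact rpow_sum_le_const_mul_sum_rpow_of_nonneg univ ((one_le_div hp0).2 hpm)
    fun j _ => rpow_nonneg (abs_nonneg _) _

end lp

namespace ContinuousMultilinearMap

variable {ι E : Type*} [Fintype ι] [NormedAddCommGroup E] [NormedSpace ℝ E]

noncomputable def polynomialNorm (L : ContinuousMultilinearMap ℝ (fun _ : ι => E) ℝ) : ℝ :=
  sSup {r : ℝ | ∃ z : E, ‖z‖ ≤ 1 ∧ r = |L (fun _ => z)|}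

variable (L : ContinuousMultilinearMap ℝ (fun _ : ι => E) ℝ)

lemma bddAbove_abs_apply_diag :
    BddAbove {r : ℝ | ∃ z : E, ‖z‖ ≤ 1 ∧ r = |L (fun _ => z)|} := by
  refine ⟨‖L‖, ?_⟩
  rintro r ⟨z, hz, rfl⟩
  calc |L (fun _ => z)| ≤ ‖L‖ * ∏ _i : ι, ‖z‖ := L.le_opNorm _
    _ ≤ ‖L‖ := mul_le_of_le_one_right (norm_nonneg L)
        (prod_le_one (fun _ _ => norm_nonneg z) fun _ _ => hz)

lemma abs_apply_diag_le_polynomialNorm {z : E} (hz : ‖z‖ ≤ 1) :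
    |L (fun _ => z)| ≤ L.polynomialNorm :=
  le_csSup L.bddAbove_abs_apply_diag ⟨z, hz, rfl⟩

lemma polynomialNorm_nonneg : 0 ≤ L.polynomialNorm :=
  (abs_nonneg _).trans (L.abs_apply_diag_le_polynomialNorm (by simp : ‖(0 : E)‖ ≤ 1))

lemma abs_apply_diag_le (z : E) :
    |L (fun _ => z)| ≤ L.polynomialNorm * ‖z‖ ^ Fintype.card ι := by
  rcases eq_or_ne z 0 with rfl | hz
  · rcases isEmpty_or_nonempty ι with hι | hι
    · simpa using L.abs_apply_diag_le_polynomialNorm (by simp : ‖(0 : E)‖ ≤ 1)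
    · rw [L.map_coord_zero (m := fun _ => 0) (Classical.arbitrary ι) rfl, abs_zero]
      exact mul_nonneg L.polynomialNorm_nonneg (by positivity)
  have hz' : 0 < ‖z‖ := norm_pos_iff.2 hz
  have hu : ‖‖z‖⁻¹ • z‖ ≤ 1 := by rw [norm_smul, norm_inv, norm_norm, inv_mul_cancel₀ hz'.ne']
  calc |L (fun _ => z)| = ‖z‖ ^ Fintype.card ι * |L (fun _ => ‖z‖⁻¹ • z)| := by
        have := L.map_smul_univ (fun _ => ‖z‖) (fun _ => ‖z‖⁻¹ • z)
        simp only [smul_inv_smul₀ hz'.ne', prod_const, card_univ, smul_eq_mul] at this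
        rw [this, abs_mul, abs_of_pos (pow_pos hz' _)]
    _ ≤ L.polynomialNorm * ‖z‖ ^ Fintype.card ι := by
        rw [mul_comm]
        gcongr
        exact L.abs_apply_diag_le_polynomialNorm hu

end ContinuousMultilinearMap

theorem stmt_17_general (p : ℝ≥0∞) [Fact (1 ≤ p)] (hp : p ≠ ∞)
    (m n : ℕ) (hpm : p.toReal < (m : ℝ))
    (L : ContinuousMultilinearMap ℝ (fun _ : Fin m => lp (fun _ : ℕ => ℝ) p) ℝ)
    (hsymm : ∀ (σ : Equiv.Perm (Fin m)) (v : Fin m → lp (fun _ : ℕ => ℝ) p),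
      L (fun i => v (σ i)) = L v)
    (x : Fin n → lp (fun _ : ℕ => ℝ) p) (hx : ∀ j, ‖x j‖ = 1)
    (hdisj : ∀ j j', j ≠ j' → ∀ t : ℕ, x j t = 0 ∨ x j' t = 0)
    (b : Fin m → Fin n) :
    |L (fun i => x (b i))| ≤
      (n : ℝ) ^ (((m : ℝ) - p.toReal) / p.toReal) * (m : ℝ) *
        2 ^ ((m : ℝ) / 2) * Real.Gamma ((m : ℝ) / 2) * (m : ℝ) ^ ((m : ℝ) / 2) /
        (Nat.factorial m : ℝ) *
        sSup {r : ℝ | ∃ z : lp (fun _ : ℕ => ℝ) p, ‖z‖ ≤ 1 ∧ r = |L (fun _ => z)|} := by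
  have hp1 : 1 ≤ p.toReal := by simpa using ENNReal.toReal_mono hp (Fact.out : 1 ≤ p)
  have hm : 2 ≤ m := by exact_mod_cast hp1.trans_lt hpm
  set c : (Fin m → Bool) → Fin n → ℝ := fun ε j => ∑ i ∈ {i | b i = j}, boolSign (ε i)
  have key : 2 ^ m * m.factorial * |L (fun i => x (b i))| ≤ L.polynomialNorm *
      ((n : ℝ) ^ (m / p.toReal - 1) * (2 ^ m * (m * 2 ^ ((m : ℝ) / 2) * Gamma (m / 2)) *
        (m : ℝ) ^ ((m : ℝ) / 2))) := calc
    _ ≤ ∑ ε : Fin m → Bool, |L (fun _ => ∑ j, c ε j • x j)| := by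
        simpa only [sum_smul_comp_eq_sum_fiber_smul _ b x, Fintype.card_fin,
          ContinuousMultilinearMap.coe_coe] using
          L.toMultilinearMap.two_pow_mul_factorial_mul_abs_le hsymm (fun i => x (b i))
    _ ≤ ∑ ε : Fin m → Bool, L.polynomialNorm *
          ((n : ℝ) ^ (m / p.toReal - 1) * ∑ j, |c ε j| ^ m) := by
        refine sum_le_sum fun ε _ => (L.abs_apply_diag_le _).trans ?_
        simpa using mul_le_mul_of_nonneg_left
          (lp.norm_sum_smul_pow_le_of_disjoint hp x hx hdisj hpm.le (c ε)) L.polynomialNorm_nonneg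
    _ = L.polynomialNorm * ((n : ℝ) ^ (m / p.toReal - 1) *
          ∑ ε : Fin m → Bool, ∑ j, |c ε j| ^ m) := by rw [mul_sum, mul_sum]
    _ ≤ _ := by
        gcongr
        · exact L.polynomialNorm_nonneg
        · simpa using sum_sum_abs_sum_fiber_boolSign_pow_le b hm
  rw [← mul_le_mul_iff_of_pos_left (by positivity : (0 : ℝ) < 2 ^ m * m.factorial)]
  refine key.trans_eq ?_
  rw [sub_div, div_self (by positivity : p.toReal ≠ 0), ContinuousMultilinearMap.polynomialNorm]
  field_simp

/-- case `1 ≤ p < m` of the `ℓ^p` estimate: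
`|L(x₁^{k₁} ⋯ x_n^{k_n})| ≤ (n^{(m-p)/p} m 2^{m/2} Γ(m/2) m^{m/2} / m!) ‖L̂‖`. -/
theorem stmt_17 (p : ℝ≥0∞) [Fact (1 ≤ p)] (hp : p ≠ ∞)
    (m n : ℕ) (hn : 0 < n) (hpm : p.toReal < (m : ℝ))
    (L : ContinuousMultilinearMap ℝ (fun _ : Fin m => lp (fun _ : ℕ => ℝ) p) ℝ)
    (hsymm : ∀ (σ : Equiv.Perm (Fin m)) (v : Fin m → lp (fun _ : ℕ => ℝ) p),
      L (fun i => v (σ i)) = L v)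
    (k : Fin n → ℕ) (hsum : ∑ j, k j = m)
    (x : Fin n → lp (fun _ : ℕ => ℝ) p) (hx : ∀ j, ‖x j‖ = 1)
    (hdisj : ∀ j j', j ≠ j' → ∀ t : ℕ, x j t = 0 ∨ x j' t = 0)
    (b : Fin m → Fin n)
    (hb : ∀ j, (Finset.univ.filter fun i => b i = j).card = k j) :
    |L (fun i => x (b i))| ≤
      (n : ℝ) ^ (((m : ℝ) - p.toReal) / p.toReal) * (m : ℝ) *
        2 ^ ((m : ℝ) / 2) * Real.Gamma ((m : ℝ) / 2) * (m : ℝ) ^ ((m : ℝ) / 2) /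
        (Nat.factorial m : ℝ) *
        sSup {r : ℝ | ∃ z : lp (fun _ : ℕ => ℝ) p, ‖z‖ ≤ 1 ∧ r = |L (fun _ => z)|} :=
  stmt_17_general p hp m n hpm L hsymm x hx hdisj b
end
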